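/- Let Θ be a saturated branch closed under the copy rule (if i:φ ∈ Θ and i:j ∈ Θ with j < i and j a root nominal, then j:φ ∈ Θ). If i:φ ∈ Θ then u(i):φ ∈ Θ, where u(i) is the least nominal ≡_Θ-equivalent to i. -/
import Mathlib


mutual
inductive PathE (P I A C : Type) : Type
  | atom (a : A)
  | jump (i : I)
  | test (φ : NodeE P I A C)
  | comp (α β : PathE P I A C)
  | union (α β : PathE P I A C)
inductive NodeE (P I A C : Type) : Type
  | prop (p : P)
  | nom (i : I)
  | neg (φ : NodeE P I A C)
  | and (φ ψ : NodeE P I A C)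
  | at (i : I) (φ : NodeE P I A C)
  | dia (a : A) (φ : NodeE P I A C)
  | cmp (b : Bool) (c : C) (α β : PathE P I A C)
end

structure HModel (P I A C : Type) where
  N : Type
  ne : Nonempty N
  R : A → N → N → Prop
  E : C → N → N → Prop
  equiv : ∀ c, Equivalence (E c)
  V : P → N → Prop
  g : I → N

mutual
def psat {P I A C : Type} (M : HModel P I A C) : PathE P I A C → M.N → M.N → Prop
  | .atom a, n, n' => M.R a n n'
  | .jump i, _, n' => M.g i = n'
  | .test φ, n, n' => n = n' ∧ nsat M φ n
  | .comp α β, n, n' => ∃ z, psat M α n z ∧ psat M β z n'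
  | .union α β, n, n' => psat M α n n' ∨ psat M β n n'
def nsat {P I A C : Type} (M : HModel P I A C) : NodeE P I A C → M.N → Prop
  | .prop p, n => M.V p n
  | .nom i, n => M.g i = n
  | .neg φ, n => ¬ nsat M φ n
  | .and φ ψ, n => nsat M φ n ∧ nsat M ψ n
  | .at i φ, _ => nsat M φ (M.g i)
  | .dia a φ, n => ∃ z, M.R a n z ∧ nsat M φ z
  | .cmp b c α β, n => ∃ z z', psat M α n z ∧ psat M β n z' ∧ (M.E c z z' ↔ b = true)
end

mutual
def nomsP {P I A C : Type} : PathE P I A C → Set I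
  | .atom _ => ∅
  | .jump i => {i}
  | .test φ => nomsN φ
  | .comp α β => nomsP α ∪ nomsP β
  | .union α β => nomsP α ∪ nomsP β
def nomsN {P I A C : Type} : NodeE P I A C → Set I
  | .prop _ => ∅
  | .nom i => {i}
  | .neg φ => nomsN φ
  | .and φ ψ => nomsN φ ∪ nomsN ψ
  | .at i φ => {i} ∪ nomsN φ
  | .dia _ φ => nomsN φ
  | .cmp _ _ α β => nomsP α ∪ nomsP β
end

def occ {P A C : Type} (Θ : Set (NodeE P ℕ A C)) (i : ℕ) : Prop :=
  ∃ ψ ∈ Θ, i ∈ nomsN ψ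

noncomputable def urf {P A C : Type} (Θ : Set (NodeE P ℕ A C)) (i : ℕ) : ℕ :=
  sInf {j | NodeE.at i (.nom j) ∈ Θ}

theorem stmt10 {P A C : Type} (Θ : Set (NodeE P ℕ A C)) (Root : Set ℕ) (i : ℕ)
    (φ : NodeE P ℕ A C)
    (href : NodeE.at i (.nom i) ∈ Θ)
    (hroot : urf Θ i ≠ i → urf Θ i ∈ Root)
    (hcopy : ∀ (a b : ℕ) (ψ : NodeE P ℕ A C), NodeE.at a ψ ∈ Θ →
      NodeE.at a (.nom b) ∈ Θ → b < a → b ∈ Root → NodeE.at b ψ ∈ Θ)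
    (h : NodeE.at i φ ∈ Θ) : NodeE.at (urf Θ i) φ ∈ Θ := by
  by_cases heq : urf Θ i = i
  · rwa [heq]
  · have hne : {j | NodeE.at i (.nom j) ∈ Θ}.Nonempty := ⟨i, href⟩
    have hmem : urf Θ i ∈ {j | NodeE.at i (.nom j) ∈ Θ} := Nat.sInf_mem hne
    have hle : urf Θ i ≤ i := Nat.sInf_le href
    exact hcopy i (urf Θ i) φ h hmem (lt_of_le_of_ne hle heq) (hroot heq)
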